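/- Let c > 0, τ̃ ∈ ℂ, and let W : ℝ → ℂ be three times continuously differentiable and satisfy (τ̃ − z²)² W'(z) + i d³/dz³( (τ̃ − z²) W(z) ) = 0 for all z ∈ ℝ. Define τ := c^{1/2} τ̃ and V(z) := c^{1/2} [ (τ̃ − c^{1/2} z²) W(c^{1/4} z) − 1_{(0,∞)}(z) (τ̃ − c^{1/2} z²) ]. Then V is three times continuously differentiable on ℝ\{0}, and with b := −2c (playing the role of U_s''(a) < 0): (τ + b z²/2) V'(z) − b z V(z) + i V'''(z) = 0 for all z ≠ 0, and the jumps at z = 0 satisfy [V] = −τ, [V'] = 0, [V''] = −b, where [g] := lim_{z→0+} g(z) − lim_{z→0−} g(z). -/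

import Mathlib

open Set Filter

/-!
Put `ℓ = c^{1/4}` and `F(y) = (τ̃ − y²) W(y)`. Since `(τ̃ − y²)² W' = (τ̃ − y²) F' + 2 y F`, the
equation for `W` says that `F` solves the jump-problem equation with `τ = τ̃`, `b = −2`. That
equation is invariant under `z ↦ ℓ z`, `τ ↦ ℓ² τ`, `b ↦ ℓ⁴ b` (up to the factor `ℓ³`), so
`V₋(z) = ℓ² F(ℓ z)` solves it with `τ = c^{1/2} τ̃`, `b = −2c`; this is `V` on `z < 0`. On `z > 0`,
`V = V₋ − (τ + b z²/2)`, and the coefficient `τ + b z²/2` is itself a solution. Its value, slope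
and curvature at `0` are `τ`, `0`, `b`, which gives the jumps.
-/

/-- The rescaled profile
`V(z) = c^{1/2}[ (τ̃ − c^{1/2} z²) W(c^{1/4} z) − 1_{(0,∞)}(z)(τ̃ − c^{1/2} z²) ]`. -/
noncomputable def Vresc (c : ℝ) (τt : ℂ) (W : ℝ → ℂ) (z : ℝ) : ℂ :=
  ((c ^ ((1:ℝ)/2) : ℝ) : ℂ) *
    ((τt - ((c ^ ((1:ℝ)/2) * z ^ 2 : ℝ) : ℂ)) * W ((c ^ ((1:ℝ)/4) : ℝ) * z)
      - (if 0 < z then τt - ((c ^ ((1:ℝ)/2) * z ^ 2 : ℝ) : ℂ) else 0))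

open Topology

noncomputable section

def shearCoeff (τ : ℂ) (b : ℝ) (z : ℝ) : ℂ := τ + ((b * z ^ 2 / 2 : ℝ) : ℂ)

/-- `b` stands for `U_s''(a)`. -/
def shearOperator (τ : ℂ) (b : ℝ) (f : ℝ → ℂ) (z : ℝ) : ℂ :=
  shearCoeff τ b z * deriv f z - ((b * z : ℝ) : ℂ) * f z + Complex.I * iteratedDeriv 3 f z

end

section shearCoeff

variable (τ : ℂ) (b : ℝ)

theorem hasDerivAt_shearCoeff (z : ℝ) : HasDerivAt (shearCoeff τ b) ((b * z : ℝ) : ℂ) z := by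
  have h := ((hasDerivAt_pow 2 z).const_mul b).div_const 2
  exact (h.congr_deriv (by push_cast; ring)).ofReal_comp.const_add τ

theorem deriv_shearCoeff : deriv (shearCoeff τ b) = fun z => ((b * z : ℝ) : ℂ) :=
  funext fun z => (hasDerivAt_shearCoeff τ b z).deriv

theorem iteratedDeriv_two_shearCoeff : iteratedDeriv 2 (shearCoeff τ b) = fun _ => (b : ℂ) := by
  rw [iteratedDeriv_succ', iteratedDeriv_one, deriv_shearCoeff]
  funext z
  rw [(((hasDerivAt_id' z).const_mul b).ofReal_comp).deriv, mul_one]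

theorem iteratedDeriv_three_shearCoeff : iteratedDeriv 3 (shearCoeff τ b) = 0 := by
  rw [iteratedDeriv_succ, iteratedDeriv_two_shearCoeff]
  exact deriv_const' _

theorem contDiff_shearCoeff {n : WithTop ℕ∞} : ContDiff ℝ n (shearCoeff τ b) :=
  contDiff_const.add (Complex.ofRealCLM.contDiff.comp
    ((contDiff_const.mul (contDiff_id.pow 2)).div_const 2))

theorem shearOperator_shearCoeff (z : ℝ) : shearOperator τ b (shearCoeff τ b) z = 0 := by
  simp only [shearOperator, deriv_shearCoeff, iteratedDeriv_three_shearCoeff, Pi.zero_apply]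
  ring

end shearCoeff

section shearOperator

variable {τ : ℂ} {b : ℝ} {f g : ℝ → ℂ} {z : ℝ}

theorem shearOperator_congr (h : f =ᶠ[𝓝 z] g) :
    shearOperator τ b f z = shearOperator τ b g z := by
  simp only [shearOperator, h.deriv_eq, h.eq_of_nhds, h.iteratedDeriv_eq]

theorem shearOperator_sub (hf : ContDiffAt ℝ 3 f z) (hg : ContDiffAt ℝ 3 g z) :
    shearOperator τ b (f - g) z = shearOperator τ b f z - shearOperator τ b g z := by
  simp only [shearOperator, deriv_sub (hf.differentiableAt (by norm_num))
    (hg.differentiableAt (by norm_num)), iteratedDeriv_sub hf hg, Pi.sub_apply]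
  ring

theorem shearOperator_const_mul (a : ℂ) :
    shearOperator τ b (fun z => a * f z) z = a * shearOperator τ b f z := by
  simp only [shearOperator, deriv_const_mul_field', iteratedDeriv_const_mul_field]
  ring

theorem shearOperator_comp_mul (hf : ContDiff ℝ 3 f) (ℓ : ℝ) :
    shearOperator (((ℓ ^ 2 : ℝ) : ℂ) * τ) (ℓ ^ 4 * b) (fun z => f (ℓ * z)) z
      = ((ℓ ^ 3 : ℝ) : ℂ) * shearOperator τ b f (ℓ * z) := by
  have h₁ : deriv (fun z => f (ℓ * z)) z = ℓ • deriv f (ℓ * z) := by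
    simpa using congrFun (iteratedDeriv_comp_const_smul (n := 1) (hf.of_le (by norm_num)) ℓ) z
  have h₃ := congrFun (iteratedDeriv_comp_const_smul hf ℓ) z
  simp only [shearOperator, shearCoeff, h₁, h₃, Complex.real_smul]
  push_cast
  ring

theorem shearOperator_sub_sq_mul {W : ℝ → ℂ} {y : ℝ} (hW : DifferentiableAt ℝ W y) :
    shearOperator τ (-2) (fun y => (τ - ((y ^ 2 : ℝ) : ℂ)) * W y) y
      = (τ - ((y ^ 2 : ℝ) : ℂ)) ^ 2 * deriv W y
        + Complex.I * iteratedDeriv 3 (fun y => (τ - ((y ^ 2 : ℝ) : ℂ)) * W y) y := by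
  have hcoeff : (fun y => τ - ((y ^ 2 : ℝ) : ℂ)) = shearCoeff τ (-2) := by
    funext y
    simp only [shearCoeff]
    push_cast
    ring
  have hderiv := ((hcoeff ▸ hasDerivAt_shearCoeff τ (-2) y).fun_mul hW.hasDerivAt).deriv
  rw [shearOperator, hderiv, ← hcoeff]
  push_cast
  ring

theorem shearOperator_eq_zero_of_eqOn {V : ℝ → ℂ} (hf : ContDiff ℝ 3 f)
    (hf_ode : ∀ z, shearOperator τ b f z = 0) (hneg : EqOn V f (Iio 0))
    (hpos : EqOn V (f - shearCoeff τ b) (Ioi 0)) (hz : z ≠ 0) : shearOperator τ b V z = 0 := by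
  rcases hz.lt_or_gt with hz | hz
  · rw [shearOperator_congr (hneg.eventuallyEq_of_mem (Iio_mem_nhds hz)), hf_ode]
  · rw [shearOperator_congr (hpos.eventuallyEq_of_mem (Ioi_mem_nhds hz)),
      shearOperator_sub hf.contDiffAt (contDiff_shearCoeff τ b).contDiffAt, hf_ode,
      shearOperator_shearCoeff, sub_zero]

end shearOperator

section piecewise

variable {E : Type*} [NormedAddCommGroup E] [NormedSpace ℝ E] {n : WithTop ℕ∞} {V f g : ℝ → E}

theorem contDiffOn_compl_zero_of_eqOn (hf : ContDiff ℝ n f) (hg : ContDiff ℝ n g)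
    (hneg : EqOn V f (Iio 0)) (hpos : EqOn V g (Ioi 0)) : ContDiffOn ℝ n V {0}ᶜ := by
  intro x hx
  rcases (mem_compl_singleton_iff.mp hx).lt_or_gt with hx | hx
  · exact (hf.contDiffAt.congr_of_eventuallyEq
      (hneg.eventuallyEq_of_mem (Iio_mem_nhds hx))).contDiffWithinAt
  · exact (hg.contDiffAt.congr_of_eventuallyEq
      (hpos.eventuallyEq_of_mem (Ioi_mem_nhds hx))).contDiffWithinAt

theorem tendsto_iteratedDeriv_nhdsWithin_of_eqOn {s : Set ℝ} (hs : IsOpen s) (hV : EqOn V g s)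
    (hg : ContDiff ℝ n g) {k : ℕ} (hk : k ≤ n) (a : ℝ) :
    Tendsto (iteratedDeriv k V) (𝓝[s] a) (𝓝 (iteratedDeriv k g a)) :=
  (((hg.continuous_iteratedDeriv k hk).tendsto a).mono_left nhdsWithin_le_nhds).congr'
    (eventuallyEq_nhdsWithin_of_eqOn (hV.iteratedDeriv_of_isOpen hs k)).symm

theorem exists_jump_iteratedDeriv_of_eqOn {p : ℝ → E} (hf : ContDiff ℝ n f) (hp : ContDiff ℝ n p)
    {k : ℕ} (hk : k ≤ n) (hneg : EqOn V f (Iio 0)) (hpos : EqOn V (f - p) (Ioi 0)) :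
    ∃ q q' : E, Tendsto (iteratedDeriv k V) (𝓝[>] 0) (𝓝 q) ∧
      Tendsto (iteratedDeriv k V) (𝓝[<] 0) (𝓝 q') ∧ q - q' = -iteratedDeriv k p 0 := by
  refine ⟨_, _, tendsto_iteratedDeriv_nhdsWithin_of_eqOn isOpen_Ioi hpos (hf.sub hp) hk 0,
    tendsto_iteratedDeriv_nhdsWithin_of_eqOn isOpen_Iio hneg hf hk 0, ?_⟩
  rw [iteratedDeriv_sub (hf.contDiffAt.of_le hk) (hp.contDiffAt.of_le hk)]
  abel

end piecewise

section Vresc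

variable {c : ℝ} {τt : ℂ} {W : ℝ → ℂ}

theorem rpow_quarter_sq (hc : 0 ≤ c) : (c ^ ((1:ℝ)/4)) ^ 2 = c ^ ((1:ℝ)/2) := by
  rw [← Real.rpow_mul_natCast hc]
  norm_num

theorem rpow_half_sq (hc : 0 ≤ c) : (c ^ ((1:ℝ)/2)) ^ 2 = c := by
  rw [← Real.rpow_mul_natCast hc]
  norm_num

theorem Vresc_eqOn_Iio (hc : 0 ≤ c) :
    EqOn (Vresc c τt W) (fun z => ((c ^ ((1:ℝ)/2) : ℝ) : ℂ) *
      ((τt - (((c ^ ((1:ℝ)/4) * z) ^ 2 : ℝ) : ℂ)) * W (c ^ ((1:ℝ)/4) * z))) (Iio 0) := by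
  intro z hz
  simp only [Vresc, if_neg (lt_asymm (mem_Iio.mp hz)), mul_pow, rpow_quarter_sq hc, sub_zero]

theorem Vresc_eqOn_Ioi (hc : 0 ≤ c) :
    EqOn (Vresc c τt W) ((fun z => ((c ^ ((1:ℝ)/2) : ℝ) : ℂ) *
      ((τt - (((c ^ ((1:ℝ)/4) * z) ^ 2 : ℝ) : ℂ)) * W (c ^ ((1:ℝ)/4) * z)))
      - shearCoeff (((c ^ ((1:ℝ)/2) : ℝ) : ℂ) * τt) (-2 * c)) (Ioi 0) := by
  intro z hz
  simp only [Vresc, if_pos (mem_Ioi.mp hz), Pi.sub_apply, shearCoeff, mul_pow, rpow_quarter_sq hc]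
  have hs : (((c ^ ((1:ℝ)/2)) ^ 2 : ℝ) : ℂ) = c := by rw [rpow_half_sq hc]
  push_cast at hs ⊢
  linear_combination (z : ℂ) ^ 2 * hs

theorem shearOperator_rescale_eq_zero (hc : 0 ≤ c) {F : ℝ → ℂ} (hF : ContDiff ℝ 3 F)
    (hF_ode : ∀ y, shearOperator τt (-2) F y = 0) (z : ℝ) :
    shearOperator (((c ^ ((1:ℝ)/2) : ℝ) : ℂ) * τt) (-2 * c)
      (fun z => ((c ^ ((1:ℝ)/2) : ℝ) : ℂ) * F (c ^ ((1:ℝ)/4) * z)) z = 0 := by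
  have hτ : c ^ ((1:ℝ)/2) = (c ^ ((1:ℝ)/4)) ^ 2 := (rpow_quarter_sq hc).symm
  have hb : -2 * c = (c ^ ((1:ℝ)/4)) ^ 4 * (-2) := by
    rw [show (c ^ ((1:ℝ)/4)) ^ 4 = ((c ^ ((1:ℝ)/4)) ^ 2) ^ 2 by ring, rpow_quarter_sq hc,
      rpow_half_sq hc]
    ring
  rw [hb, shearOperator_const_mul, hτ, shearOperator_comp_mul hF, hF_ode, mul_zero, mul_zero]

end Vresc

theorem rescaled_profile
    (c : ℝ) (hc : 0 < c) (τt : ℂ)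
    (W : ℝ → ℂ) (hW : ContDiff ℝ 3 W)
    (hODE : ∀ z : ℝ,
      (τt - ((z ^ 2 : ℝ) : ℂ)) ^ 2 * deriv W z
        + Complex.I * iteratedDeriv 3 (fun z' => (τt - ((z' ^ 2 : ℝ) : ℂ)) * W z') z = 0) :
    -- with τ := c^{1/2} τ̃, b := −2c, V := Vresc c τ̃ W:
    ContDiffOn ℝ 3 (Vresc c τt W) {(0:ℝ)}ᶜ ∧
    (∀ z : ℝ, z ≠ 0 →
      (((c ^ ((1:ℝ)/2) : ℝ) : ℂ) * τt + (((-2*c) * z ^ 2 / 2 : ℝ) : ℂ)) * deriv (Vresc c τt W) z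
        - (((-2*c) * z : ℝ) : ℂ) * Vresc c τt W z
        + Complex.I * iteratedDeriv 3 (Vresc c τt W) z = 0) ∧
    ∃ p₀ q₀ p₁ q₁ p₂ q₂ : ℂ,
      Tendsto (Vresc c τt W) (nhdsWithin 0 (Ioi 0)) (nhds p₀) ∧
      Tendsto (Vresc c τt W) (nhdsWithin 0 (Iio 0)) (nhds q₀) ∧
      p₀ - q₀ = -(((c ^ ((1:ℝ)/2) : ℝ) : ℂ) * τt) ∧
      Tendsto (deriv (Vresc c τt W)) (nhdsWithin 0 (Ioi 0)) (nhds p₁) ∧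
      Tendsto (deriv (Vresc c τt W)) (nhdsWithin 0 (Iio 0)) (nhds q₁) ∧
      p₁ - q₁ = 0 ∧
      Tendsto (iteratedDeriv 2 (Vresc c τt W)) (nhdsWithin 0 (Ioi 0)) (nhds p₂) ∧
      Tendsto (iteratedDeriv 2 (Vresc c τt W)) (nhdsWithin 0 (Iio 0)) (nhds q₂) ∧
      p₂ - q₂ = -(((-2*c : ℝ) : ℂ)) := by
  set s : ℝ := c ^ ((1:ℝ)/2)
  set ℓ : ℝ := c ^ ((1:ℝ)/4)
  set F : ℝ → ℂ := fun y => (τt - ((y ^ 2 : ℝ) : ℂ)) * W y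
  set f : ℝ → ℂ := fun z => (s : ℂ) * F (ℓ * z)
  set p := shearCoeff ((s : ℂ) * τt) (-2 * c)
  have hF : ContDiff ℝ 3 F :=
    (contDiff_const.sub (Complex.ofRealCLM.contDiff.comp (contDiff_id.pow 2))).mul hW
  have hf : ContDiff ℝ 3 f := contDiff_const.mul (hF.comp (contDiff_const.mul contDiff_id))
  have hp : ContDiff ℝ 3 p := contDiff_shearCoeff _ _
  have hneg : EqOn (Vresc c τt W) f (Iio 0) := Vresc_eqOn_Iio hc.le
  have hpos : EqOn (Vresc c τt W) (f - p) (Ioi 0) := Vresc_eqOn_Ioi hc.le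
  have hF_ode (y : ℝ) : shearOperator τt (-2) F y = 0 := by
    rw [shearOperator_sub_sq_mul (hW.differentiable (by norm_num) y), hODE]
  refine ⟨contDiffOn_compl_zero_of_eqOn hf (hf.sub hp) hneg hpos,
    fun z hz => shearOperator_eq_zero_of_eqOn hf (shearOperator_rescale_eq_zero hc.le hF hF_ode)
      hneg hpos hz, ?_⟩
  obtain ⟨p₀, q₀, hp₀, hq₀, hj₀⟩ :=
    exists_jump_iteratedDeriv_of_eqOn hf hp (k := 0) (by norm_num) hneg hpos
  obtain ⟨p₁, q₁, hp₁, hq₁, hj₁⟩ :=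
    exists_jump_iteratedDeriv_of_eqOn hf hp (k := 1) (by norm_num) hneg hpos
  obtain ⟨p₂, q₂, hp₂, hq₂, hj₂⟩ :=
    exists_jump_iteratedDeriv_of_eqOn hf hp (k := 2) (by norm_num) hneg hpos
  rw [iteratedDeriv_zero] at hp₀ hq₀
  rw [iteratedDeriv_one] at hp₁ hq₁
  refine ⟨p₀, q₀, p₁, q₁, p₂, q₂, hp₀, hq₀, ?_, hp₁, hq₁, ?_, hp₂, hq₂, ?_⟩
  · rw [hj₀, iteratedDeriv_zero]
    simp [p, shearCoeff]
  · rw [hj₁, iteratedDeriv_one, deriv_shearCoeff]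
    simp
  · rw [hj₂, iteratedDeriv_two_shearCoeff]
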